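/- Let n ≥ 1, λ_1,…,λ_n pairwise distinct reals, α_1,…,α_n reals, and let y_1,…,y_n, f_1,…,f_n : ℝ × I → ℝ be smooth (I an open interval, 0 ∉ I) satisfying the system (yfx), the system (yft), and the constraint (uy'). Fix k and suppose f_j − f_k is nowhere vanishing for every j ≠ k. Define (the Bäcklund transformation B_k): f̃_j := −f_k − (λ_j − λ_k)/(f_j − f_k) for j ≠ k, f̃_k := −f_k; ỹ_j := ((f_j − f_k)/(λ_j − λ_k))·((f_j − f_k) y_j − α_j) for j ≠ k, ỹ_k := −y_k + 6t(f_k² + λ_k) − x − Σ_{j≠k}(ỹ_j + y_j); α̃_j := α_j for j ≠ k, α̃_k := 1 − α_k. Then (ỹ_j, f̃_j) satisfy (yfx), (yft) and (uy') with parameters α̃_1,…,α̃_n and the same λ_1,…,λ_n. -/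

import Mathlib

open Set Function

noncomputable section

/-- Partial derivative in the first (space) variable. -/
def pdx (u : ℝ → ℝ → ℝ) : ℝ → ℝ → ℝ := fun x t => deriv (fun x' => u x' t) x

/-- Partial derivative in the second (time) variable. -/
def pdt (u : ℝ → ℝ → ℝ) : ℝ → ℝ → ℝ := fun x t => deriv (fun t' => u x t') t

/-- The constraint (uy'): `u = x/(6t) + (y₁ + ⋯ + yₙ)/(3t)`. -/
def ucon (n : ℕ) (y : Fin n → ℝ → ℝ → ℝ) : ℝ → ℝ → ℝ :=
  fun x t => x / (6*t) + (∑ j, y j x t) / (3*t)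

/-!
On a solution, (yfx), (yft) and (uy') express the first `x`- and `t`-derivatives of `y_j`, `f_j`
and `u`, and also `u_xx`, as explicit functions of the values. The definition of `ỹ_k` is
exactly what makes `ũ = 2 (f_k² + λ_k) − u = u − 2 ∂ₓ f_k`.
With this, the derivatives of `ỹ_j`, `f̃_j` follow from the chain rule, and every equation of the
transformed system becomes a rational identity in the values. For `ỹ_k`, which contains
`∑_{j ≠ k} (ỹ_j + y_j)`, the point is that the derivatives of `ỹ_j + y_j` are combinations of
`y_j − ỹ_j`, `∂ₓ y_j` and `∂ₓ² y_j` whose coefficients depend only on the index `k`.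
-/

lemma hasDerivAt_pdx {w : ℝ → ℝ → ℝ} {x t : ℝ} (hw : DifferentiableAt ℝ (uncurry w) (x, t)) :
    HasDerivAt (fun x' => w x' t) (pdx w x t) x := by
  exact (hw.comp x (differentiableAt_id.prodMk (differentiableAt_const t))).hasDerivAt

lemma hasDerivAt_pdt {w : ℝ → ℝ → ℝ} {x t : ℝ} (hw : DifferentiableAt ℝ (uncurry w) (x, t)) :
    HasDerivAt (fun t' => w x t') (pdt w x t) t := by
  exact (hw.comp t ((differentiableAt_const x).prodMk differentiableAt_id)).hasDerivAt

lemma pdx_eq_of_hasDerivAt {w : ℝ → ℝ → ℝ} {x t w' : ℝ}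
    (h : HasDerivAt (fun x' => w x' t) w' x) : pdx w x t = w' :=
  h.deriv

lemma pdt_eq_of_hasDerivAt {w : ℝ → ℝ → ℝ} {x t w' : ℝ}
    (h : HasDerivAt (fun t' => w x t') w' t) : pdt w x t = w' :=
  h.deriv

lemma differentiableAt_of_contDiffOn_prod {w : ℝ → ℝ → ℝ} {I : Set ℝ} (hI : IsOpen I)
    (hw : ContDiffOn ℝ (⊤ : ℕ∞) (uncurry w) (univ ×ˢ I)) {x t : ℝ} (ht : t ∈ I) :
    DifferentiableAt ℝ (uncurry w) (x, t) :=
  (hw.differentiableOn (by simp)).differentiableAt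
    ((isOpen_univ.prod hI).mem_nhds (mk_mem_prod (mem_univ x) ht))

lemma hasDerivAt_backlund_ny {φ ψ η : ℝ → ℝ} {φ' ψ' η' s : ℝ} (μ α : ℝ)
    (hφ : HasDerivAt φ φ' s) (hψ : HasDerivAt ψ ψ' s) (hη : HasDerivAt η η' s) :
    HasDerivAt (fun s => (φ s - ψ s) / μ * ((φ s - ψ s) * η s - α))
      ((φ' - ψ') / μ * ((φ s - ψ s) * η s - α)
        + (φ s - ψ s) / μ * ((φ' - ψ') * η s + (φ s - ψ s) * η')) s :=
  ((hφ.sub hψ).div_const μ).mul (((hφ.sub hψ).mul hη).sub_const α)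

lemma hasDerivAt_backlund_nf {φ ψ : ℝ → ℝ} {φ' ψ' s : ℝ} (μ : ℝ)
    (hφ : HasDerivAt φ φ' s) (hψ : HasDerivAt ψ ψ' s) (hne : φ s - ψ s ≠ 0) :
    HasDerivAt (fun s => -ψ s - μ / (φ s - ψ s)) (-ψ' + μ * (φ' - ψ') / (φ s - ψ s) ^ 2) s := by
  exact (hψ.neg.sub ((hasDerivAt_const s μ).div (hφ.sub hψ) hne)).congr_deriv
    (by rw [Pi.sub_apply]; ring)

def SatisfiesYFX (n : ℕ) (lam alp : Fin n → ℝ) (I : Set ℝ) (y f : Fin n → ℝ → ℝ → ℝ) : Prop :=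
  ∀ j x t, t ∈ I →
    pdx (y j) x t = 2 * y j x t * f j x t - alp j
    ∧ pdx (f j) x t = ucon n y x t - (f j x t)^2 - lam j

def SatisfiesYFT (n : ℕ) (lam : Fin n → ℝ) (I : Set ℝ) (y f : Fin n → ℝ → ℝ → ℝ) : Prop :=
  ∀ j x t, t ∈ I →
    pdt (y j) x t
      = 2 * pdx (ucon n y) x t * y j x t
        - 2 * (ucon n y x t + 2*lam j) * pdx (y j) x t
    ∧ pdt (f j) x t
      = pdx (fun x' t' => pdx (ucon n y) x' t'
          - 2*(ucon n y x' t' + 2*lam j) * f j x' t') x t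

structure IsSolution (n : ℕ) (lam alp : Fin n → ℝ) (I : Set ℝ) (y f : Fin n → ℝ → ℝ → ℝ) :
    Prop where
  differentiableAt_y : ∀ j x t, t ∈ I → DifferentiableAt ℝ (uncurry (y j)) (x, t)
  differentiableAt_f : ∀ j x t, t ∈ I → DifferentiableAt ℝ (uncurry (f j)) (x, t)
  yfx : SatisfiesYFX n lam alp I y f
  yft : SatisfiesYFT n lam I y f

structure IsBacklund {n : ℕ} (k : Fin n) (lam alp : Fin n → ℝ) (y f ny nf : Fin n → ℝ → ℝ → ℝ) :
    Prop where
  nf_of_ne : ∀ j, j ≠ k → ∀ x t, nf j x t = -(f k x t) - (lam j - lam k) / (f j x t - f k x t)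
  nf_self : ∀ x t, nf k x t = -(f k x t)
  ny_of_ne : ∀ j, j ≠ k → ∀ x t,
    ny j x t = ((f j x t - f k x t) / (lam j - lam k)) * ((f j x t - f k x t) * y j x t - alp j)
  ny_self : ∀ x t, ny k x t = -(y k x t) + 6*t*((f k x t)^2 + lam k) - x
    - ∑ j ∈ Finset.univ.erase k, (ny j x t + y j x t)

/- On a solution, `yx`, `fx`, `ux`, `yxx`, `uxx`, `yt`, `ft` are the values of `∂ₓ y_j`, `∂ₓ f_j`,
`∂ₓ u`, `∂ₓ² y_j`, `∂ₓ² u`, `∂ₜ y_j`, `∂ₜ f_j`. -/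
namespace Jet

variable {n : ℕ} (lam alp : Fin n → ℝ) (y f : Fin n → ℝ → ℝ → ℝ) (j : Fin n) (x t : ℝ)

def yx : ℝ := 2 * y j x t * f j x t - alp j

def fx : ℝ := ucon n y x t - f j x t ^ 2 - lam j

def ux : ℝ := 1 / (6 * t) + (∑ i, yx alp y f i x t) / (3 * t)

def yxx : ℝ := 2 * yx alp y f j x t * f j x t + 2 * y j x t * fx lam y f j x t

def uxx : ℝ := (∑ i, yxx lam alp y f i x t) / (3 * t)

def yt : ℝ := 2 * ux alp y f x t * y j x t - 2 * (ucon n y x t + 2 * lam j) * yx alp y f j x t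

def ft : ℝ := uxx lam alp y f x t - 2 * ux alp y f x t * f j x t
  - 2 * (ucon n y x t + 2 * lam j) * fx lam y f j x t

end Jet

open Jet

namespace IsSolution

variable {n : ℕ} {lam alp : Fin n → ℝ} {I : Set ℝ} {y f : Fin n → ℝ → ℝ → ℝ} {x t : ℝ}

lemma hasDerivAt_y_x (hs : IsSolution n lam alp I y f) (j : Fin n) (ht : t ∈ I) :
    HasDerivAt (fun x' => y j x' t) (yx alp y f j x t) x := by
  have h := hasDerivAt_pdx (hs.differentiableAt_y j x t ht)
  rwa [(hs.yfx j x t ht).1] at h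

lemma hasDerivAt_f_x (hs : IsSolution n lam alp I y f) (j : Fin n) (ht : t ∈ I) :
    HasDerivAt (fun x' => f j x' t) (fx lam y f j x t) x := by
  have h := hasDerivAt_pdx (hs.differentiableAt_f j x t ht)
  rwa [(hs.yfx j x t ht).2] at h

lemma hasDerivAt_ucon_x (hs : IsSolution n lam alp I y f) (ht : t ∈ I) :
    HasDerivAt (fun x' => ucon n y x' t) (ux alp y f x t) x :=
  ((hasDerivAt_id x).div_const (6 * t)).add
    ((HasDerivAt.fun_sum fun j _ => hs.hasDerivAt_y_x j ht).div_const (3 * t))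

lemma pdx_ucon (hs : IsSolution n lam alp I y f) (ht : t ∈ I) :
    pdx (ucon n y) x t = ux alp y f x t :=
  (hs.hasDerivAt_ucon_x ht).deriv

lemma hasDerivAt_fx_x (hs : IsSolution n lam alp I y f) (j : Fin n) (ht : t ∈ I) :
    HasDerivAt (fun x' => fx lam y f j x' t)
      (ux alp y f x t - 2 * f j x t * fx lam y f j x t) x := by
  exact (((hs.hasDerivAt_ucon_x ht).sub ((hs.hasDerivAt_f_x j ht).pow 2)).sub_const
    (lam j)).congr_deriv (by ring)

lemma hasDerivAt_ux_x (hs : IsSolution n lam alp I y f) (ht : t ∈ I) :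
    HasDerivAt (fun x' => ux alp y f x' t) (uxx lam alp y f x t) x := by
  exact ((HasDerivAt.fun_sum fun j _ =>
    (((hs.hasDerivAt_y_x j ht).const_mul 2).mul (hs.hasDerivAt_f_x j ht)).sub_const (alp j)
      ).div_const (3 * t)).const_add _

lemma hasDerivAt_pdx_ucon_x (hs : IsSolution n lam alp I y f) (ht : t ∈ I) :
    HasDerivAt (fun x' => pdx (ucon n y) x' t) (uxx lam alp y f x t) x :=
  (hs.hasDerivAt_ux_x ht).congr_of_eventuallyEq (.of_forall fun _ => hs.pdx_ucon ht)

lemma hasDerivAt_y_t (hs : IsSolution n lam alp I y f) (j : Fin n) (ht : t ∈ I) :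
    HasDerivAt (fun t' => y j x t') (yt lam alp y f j x t) t := by
  have h := hasDerivAt_pdt (hs.differentiableAt_y j x t ht)
  rwa [(hs.yft j x t ht).1, hs.pdx_ucon ht, (hs.yfx j x t ht).1] at h

lemma hasDerivAt_f_t (hs : IsSolution n lam alp I y f) (j : Fin n) (ht : t ∈ I) :
    HasDerivAt (fun t' => f j x t') (ft lam alp y f j x t) t := by
  have hrhs : HasDerivAt (fun x' => pdx (ucon n y) x' t
      - 2 * (ucon n y x' t + 2 * lam j) * f j x' t) (ft lam alp y f j x t) x := by
    exact ((hs.hasDerivAt_pdx_ucon_x ht).sub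
      ((((hs.hasDerivAt_ucon_x ht).add_const (2 * lam j)).const_mul 2).mul
        (hs.hasDerivAt_f_x j ht))).congr_deriv (by unfold ft; ring)
  have h := hasDerivAt_pdt (hs.differentiableAt_f j x t ht)
  rwa [(hs.yft j x t ht).2.trans hrhs.deriv] at h

end IsSolution

namespace IsBacklund

variable {n : ℕ} {k : Fin n} {lam alp : Fin n → ℝ} {I : Set ℝ}
  {y f ny nf : Fin n → ℝ → ℝ → ℝ} {x t : ℝ}

lemma sum_ny (hB : IsBacklund k lam alp y f ny nf) (x t : ℝ) :
    ∑ j, ny j x t = 6 * t * (f k x t ^ 2 + lam k) - x - ∑ j, y j x t := by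
  simp only [← Finset.add_sum_erase _ _ (Finset.mem_univ k)]
  rw [hB.ny_self, Finset.sum_add_distrib]
  ring

lemma ucon_eq (hB : IsBacklund k lam alp y f ny nf) (ht0 : t ≠ 0) (x : ℝ) :
    ucon n ny x t = 2 * (f k x t ^ 2 + lam k) - ucon n y x t := by
  simp only [ucon, hB.sum_ny]
  field_simp
  ring

lemma hasDerivAt_nf_self_x (hB : IsBacklund k lam alp y f ny nf)
    (hs : IsSolution n lam alp I y f) (ht : t ∈ I) :
    HasDerivAt (fun x' => nf k x' t) (-fx lam y f k x t) x :=
  (hs.hasDerivAt_f_x k ht).neg.congr_of_eventuallyEq (.of_forall fun x' => hB.nf_self x' t)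

lemma hasDerivAt_nf_x (hB : IsBacklund k lam alp y f ny nf) (hs : IsSolution n lam alp I y f)
    {j : Fin n} (hj : j ≠ k) (ht : t ∈ I) (hjk : f j x t - f k x t ≠ 0) :
    HasDerivAt (fun x' => nf j x' t) (-fx lam y f k x t
      + (lam j - lam k) * (fx lam y f j x t - fx lam y f k x t) / (f j x t - f k x t) ^ 2) x :=
  (hasDerivAt_backlund_nf _ (hs.hasDerivAt_f_x j ht) (hs.hasDerivAt_f_x k ht)
    hjk).congr_of_eventuallyEq (.of_forall fun x' => hB.nf_of_ne j hj x' t)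

lemma hasDerivAt_ny_x (hB : IsBacklund k lam alp y f ny nf) (hs : IsSolution n lam alp I y f)
    {j : Fin n} (hj : j ≠ k) (ht : t ∈ I) :
    HasDerivAt (fun x' => ny j x' t)
      ((fx lam y f j x t - fx lam y f k x t) / (lam j - lam k)
          * ((f j x t - f k x t) * y j x t - alp j)
        + (f j x t - f k x t) / (lam j - lam k)
          * ((fx lam y f j x t - fx lam y f k x t) * y j x t
            + (f j x t - f k x t) * yx alp y f j x t)) x :=
  (hasDerivAt_backlund_ny _ _ (hs.hasDerivAt_f_x j ht) (hs.hasDerivAt_f_x k ht)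
    (hs.hasDerivAt_y_x j ht)).congr_of_eventuallyEq (.of_forall fun x' => hB.ny_of_ne j hj x' t)

lemma hasDerivAt_ny_add_y_x (hB : IsBacklund k lam alp y f ny nf)
    (hs : IsSolution n lam alp I y f) {j : Fin n} (hj : j ≠ k) (hμ : lam j ≠ lam k)
    (ht : t ∈ I) :
    HasDerivAt (fun x' => ny j x' t + y j x' t) (2 * f k x t * (y j x t - ny j x t)) x := by
  refine ((hB.hasDerivAt_ny_x hs hj ht).add (hs.hasDerivAt_y_x j ht)).congr_deriv ?_
  have hμ' : lam j - lam k ≠ 0 := sub_ne_zero.mpr hμ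
  rw [hB.ny_of_ne j hj]
  simp only [yx, fx]
  field_simp
  ring

lemma hasDerivAt_ny_self_x (hB : IsBacklund k lam alp y f ny nf)
    (hs : IsSolution n lam alp I y f) (hlam : Injective lam) (ht : t ∈ I) :
    HasDerivAt (fun x' => ny k x' t) (-yx alp y f k x t
      + 12 * t * f k x t * fx lam y f k x t - 1
      - ∑ i ∈ Finset.univ.erase k, 2 * f k x t * (y i x t - ny i x t)) x := by
  have hsum := HasDerivAt.fun_sum (u := Finset.univ.erase k) fun i hi =>
    hB.hasDerivAt_ny_add_y_x hs (Finset.ne_of_mem_erase hi)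
      (hlam.ne (Finset.ne_of_mem_erase hi)) ht (x := x)
  refine ((((hs.hasDerivAt_y_x k ht).neg.add ((((hs.hasDerivAt_f_x k ht).pow 2).add_const
    (lam k)).const_mul (6 * t))).sub (hasDerivAt_id x)).sub hsum).congr_of_eventuallyEq
    (.of_forall fun x' => hB.ny_self x' t) |>.congr_deriv ?_
  ring

lemma pdx_nf (hB : IsBacklund k lam alp y f ny nf) (hs : IsSolution n lam alp I y f)
    (j : Fin n) (ht : t ∈ I) (ht0 : t ≠ 0) (hjk : j ≠ k → f j x t - f k x t ≠ 0) :
    pdx (nf j) x t = ucon n ny x t - nf j x t ^ 2 - lam j := by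
  rw [hB.ucon_eq ht0]
  rcases eq_or_ne j k with rfl | hj
  · rw [pdx_eq_of_hasDerivAt (hB.hasDerivAt_nf_self_x hs ht), hB.nf_self, fx]
    ring
  · have hjk := hjk hj
    rw [pdx_eq_of_hasDerivAt (hB.hasDerivAt_nf_x hs hj ht hjk), hB.nf_of_ne j hj]
    simp only [fx]
    field_simp
    ring

lemma pdx_ny_of_ne (hB : IsBacklund k lam alp y f ny nf) (hs : IsSolution n lam alp I y f)
    {j : Fin n} (hj : j ≠ k) (hμ : lam j ≠ lam k) (ht : t ∈ I) (hjk : f j x t - f k x t ≠ 0) :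
    pdx (ny j) x t = 2 * ny j x t * nf j x t - alp j := by
  have hμ' : lam j - lam k ≠ 0 := sub_ne_zero.mpr hμ
  rw [pdx_eq_of_hasDerivAt (hB.hasDerivAt_ny_x hs hj ht), hB.ny_of_ne j hj, hB.nf_of_ne j hj]
  simp only [yx, fx]
  field_simp
  ring

lemma pdx_ny_self (hB : IsBacklund k lam alp y f ny nf) (hs : IsSolution n lam alp I y f)
    (hlam : Injective lam) (ht : t ∈ I) (ht0 : t ≠ 0) :
    pdx (ny k) x t = 2 * ny k x t * nf k x t - (1 - alp k) := by
  rw [pdx_eq_of_hasDerivAt (hB.hasDerivAt_ny_self_x hs hlam ht), hB.nf_self, hB.ny_self,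
    ← Finset.mul_sum, Finset.sum_sub_distrib, Finset.sum_add_distrib]
  simp only [yx, fx, ucon, ← Finset.add_sum_erase _ _ (Finset.mem_univ k)]
  field_simp
  ring

lemma hasDerivAt_ucon_x (hB : IsBacklund k lam alp y f ny nf) (hs : IsSolution n lam alp I y f)
    (ht : t ∈ I) (ht0 : t ≠ 0) :
    HasDerivAt (fun x' => ucon n ny x' t)
      (4 * f k x t * fx lam y f k x t - ux alp y f x t) x :=
  (((((hs.hasDerivAt_f_x k ht).pow 2).add_const (lam k)).const_mul 2).sub
    (hs.hasDerivAt_ucon_x ht)).congr_of_eventuallyEq (.of_forall fun _ => hB.ucon_eq ht0 _)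
    |>.congr_deriv (by ring)

lemma pdx_ucon (hB : IsBacklund k lam alp y f ny nf) (hs : IsSolution n lam alp I y f)
    (ht : t ∈ I) (ht0 : t ≠ 0) :
    pdx (ucon n ny) x t = 4 * f k x t * fx lam y f k x t - ux alp y f x t :=
  (hB.hasDerivAt_ucon_x hs ht ht0).deriv

lemma hasDerivAt_pdx_ucon_x (hB : IsBacklund k lam alp y f ny nf)
    (hs : IsSolution n lam alp I y f) (ht : t ∈ I) (ht0 : t ≠ 0) :
    HasDerivAt (fun x' => pdx (ucon n ny) x' t)
      (4 * (fx lam y f k x t ^ 2 + f k x t * (ux alp y f x t - 2 * f k x t * fx lam y f k x t))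
        - uxx lam alp y f x t) x :=
  ((((hs.hasDerivAt_f_x k ht).const_mul 4).mul (hs.hasDerivAt_fx_x k ht)).sub
    (hs.hasDerivAt_ux_x ht)).congr_of_eventuallyEq (.of_forall fun _ => hB.pdx_ucon hs ht ht0)
    |>.congr_deriv (by ring)

lemma pdx_yft_rhs (hB : IsBacklund k lam alp y f ny nf) (hs : IsSolution n lam alp I y f)
    (ht : t ∈ I) (ht0 : t ≠ 0) (c : ℝ) {g : ℝ → ℝ → ℝ} {g' : ℝ}
    (hg : HasDerivAt (fun x' => g x' t) g' x) :
    pdx (fun x' t' => pdx (ucon n ny) x' t' - 2 * (ucon n ny x' t' + c) * g x' t') x t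
      = 4 * (fx lam y f k x t ^ 2 + f k x t * (ux alp y f x t - 2 * f k x t * fx lam y f k x t))
        - uxx lam alp y f x t
        - 2 * ((4 * f k x t * fx lam y f k x t - ux alp y f x t) * g x t
          + (ucon n ny x t + c) * g') := by
  exact ((hB.hasDerivAt_pdx_ucon_x hs ht ht0).sub
    ((((hB.hasDerivAt_ucon_x hs ht ht0).add_const c).const_mul 2).mul hg)).deriv.trans
    (by ring)

lemma hasDerivAt_nf_self_t (hB : IsBacklund k lam alp y f ny nf)
    (hs : IsSolution n lam alp I y f) (ht : t ∈ I) :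
    HasDerivAt (fun t' => nf k x t') (-ft lam alp y f k x t) t :=
  (hs.hasDerivAt_f_t k ht).neg.congr_of_eventuallyEq (.of_forall fun t' => hB.nf_self x t')

lemma hasDerivAt_nf_t (hB : IsBacklund k lam alp y f ny nf) (hs : IsSolution n lam alp I y f)
    {j : Fin n} (hj : j ≠ k) (ht : t ∈ I) (hjk : f j x t - f k x t ≠ 0) :
    HasDerivAt (fun t' => nf j x t') (-ft lam alp y f k x t
      + (lam j - lam k) * (ft lam alp y f j x t - ft lam alp y f k x t)
        / (f j x t - f k x t) ^ 2) t :=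
  (hasDerivAt_backlund_nf _ (hs.hasDerivAt_f_t j ht) (hs.hasDerivAt_f_t k ht)
    hjk).congr_of_eventuallyEq (.of_forall fun t' => hB.nf_of_ne j hj x t')

lemma hasDerivAt_ny_t (hB : IsBacklund k lam alp y f ny nf) (hs : IsSolution n lam alp I y f)
    {j : Fin n} (hj : j ≠ k) (ht : t ∈ I) :
    HasDerivAt (fun t' => ny j x t')
      ((ft lam alp y f j x t - ft lam alp y f k x t) / (lam j - lam k)
          * ((f j x t - f k x t) * y j x t - alp j)
        + (f j x t - f k x t) / (lam j - lam k)
          * ((ft lam alp y f j x t - ft lam alp y f k x t) * y j x t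
            + (f j x t - f k x t) * yt lam alp y f j x t)) t :=
  (hasDerivAt_backlund_ny _ _ (hs.hasDerivAt_f_t j ht) (hs.hasDerivAt_f_t k ht)
    (hs.hasDerivAt_y_t j ht)).congr_of_eventuallyEq (.of_forall fun t' => hB.ny_of_ne j hj x t')

lemma pdt_nf (hB : IsBacklund k lam alp y f ny nf) (hs : IsSolution n lam alp I y f)
    (j : Fin n) (ht : t ∈ I) (ht0 : t ≠ 0) (hjk : j ≠ k → f j x t - f k x t ≠ 0) :
    pdt (nf j) x t = pdx (fun x' t' => pdx (ucon n ny) x' t'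
      - 2 * (ucon n ny x' t' + 2 * lam j) * nf j x' t') x t := by
  rcases eq_or_ne j k with rfl | hj
  · rw [pdt_eq_of_hasDerivAt (hB.hasDerivAt_nf_self_t hs ht),
      hB.pdx_yft_rhs hs ht ht0 _ (hB.hasDerivAt_nf_self_x hs ht), hB.nf_self, hB.ucon_eq ht0]
    simp only [ft, fx]
    ring
  · have hjk := hjk hj
    rw [pdt_eq_of_hasDerivAt (hB.hasDerivAt_nf_t hs hj ht hjk),
      hB.pdx_yft_rhs hs ht ht0 _ (hB.hasDerivAt_nf_x hs hj ht hjk), hB.nf_of_ne j hj,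
      hB.ucon_eq ht0]
    simp only [ft, fx]
    field_simp
    ring

lemma pdt_ny_of_ne (hB : IsBacklund k lam alp y f ny nf) (hs : IsSolution n lam alp I y f)
    {j : Fin n} (hj : j ≠ k) (hμ : lam j ≠ lam k) (ht : t ∈ I) (ht0 : t ≠ 0)
    (hjk : f j x t - f k x t ≠ 0) :
    pdt (ny j) x t = 2 * pdx (ucon n ny) x t * ny j x t
      - 2 * (ucon n ny x t + 2 * lam j) * pdx (ny j) x t := by
  have hμ' : lam j - lam k ≠ 0 := sub_ne_zero.mpr hμ
  rw [pdt_eq_of_hasDerivAt (hB.hasDerivAt_ny_t hs hj ht), hB.pdx_ny_of_ne hs hj hμ ht hjk,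
    hB.pdx_ucon hs ht ht0, hB.ucon_eq ht0, hB.ny_of_ne j hj, hB.nf_of_ne j hj]
  simp only [yt, ft, yx, fx]
  field_simp
  ring

lemma hasDerivAt_ny_add_y_t (hB : IsBacklund k lam alp y f ny nf)
    (hs : IsSolution n lam alp I y f) {j : Fin n} (hj : j ≠ k) (hμ : lam j ≠ lam k)
    (ht : t ∈ I) :
    HasDerivAt (fun t' => ny j x t' + y j x t')
      ((2 * ux alp y f x t - 4 * f k x t * (ucon n y x t + 2 * lam k)) * (y j x t - ny j x t)
        - 4 * (ucon n y x t + f k x t ^ 2 - lam k) * yx alp y f j x t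
        + 4 * f k x t * yxx lam alp y f j x t) t := by
  refine ((hB.hasDerivAt_ny_t hs hj ht).add (hs.hasDerivAt_y_t j ht)).congr_deriv ?_
  have hμ' : lam j - lam k ≠ 0 := sub_ne_zero.mpr hμ
  rw [hB.ny_of_ne j hj]
  simp only [yt, ft, yxx, yx, fx]
  field_simp
  ring

lemma hasDerivAt_ny_self_t (hB : IsBacklund k lam alp y f ny nf)
    (hs : IsSolution n lam alp I y f) (hlam : Injective lam) (ht : t ∈ I) :
    HasDerivAt (fun t' => ny k x t') (-yt lam alp y f k x t
      + 6 * (f k x t ^ 2 + lam k) + 12 * t * f k x t * ft lam alp y f k x t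
      - ∑ i ∈ Finset.univ.erase k,
        ((2 * ux alp y f x t - 4 * f k x t * (ucon n y x t + 2 * lam k)) * (y i x t - ny i x t)
          - 4 * (ucon n y x t + f k x t ^ 2 - lam k) * yx alp y f i x t
          + 4 * f k x t * yxx lam alp y f i x t)) t := by
  have hsum := HasDerivAt.fun_sum (u := Finset.univ.erase k) fun i hi =>
    hB.hasDerivAt_ny_add_y_t hs (Finset.ne_of_mem_erase hi)
      (hlam.ne (Finset.ne_of_mem_erase hi)) ht (x := x)
  refine ((((hs.hasDerivAt_y_t k ht).neg.add ((((hasDerivAt_id t).const_mul 6).mul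
    (((hs.hasDerivAt_f_t k ht).pow 2).add_const (lam k))))).sub_const x).sub
    hsum).congr_of_eventuallyEq (.of_forall fun t' => hB.ny_self x t') |>.congr_deriv ?_
  simp only [id_eq, Pi.pow_apply]
  ring

lemma pdt_ny_self (hB : IsBacklund k lam alp y f ny nf) (hs : IsSolution n lam alp I y f)
    (hlam : Injective lam) (ht : t ∈ I) (ht0 : t ≠ 0) :
    pdt (ny k) x t = 2 * pdx (ucon n ny) x t * ny k x t
      - 2 * (ucon n ny x t + 2 * lam k) * pdx (ny k) x t := by
  rw [pdt_eq_of_hasDerivAt (hB.hasDerivAt_ny_self_t hs hlam ht), hB.pdx_ny_self hs hlam ht ht0,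
    hB.pdx_ucon hs ht ht0, hB.ucon_eq ht0, hB.nf_self, hB.ny_self]
  simp only [Finset.sum_add_distrib, Finset.sum_sub_distrib, ← Finset.mul_sum]
  simp only [yt, ft, ux, uxx, yxx, yx, fx, ucon, ← Finset.add_sum_erase _ _ (Finset.mem_univ k)]
  field_simp
  ring

theorem satisfiesYFX (hB : IsBacklund k lam alp y f ny nf) (hs : IsSolution n lam alp I y f)
    (hlam : Injective lam) (hI0 : (0 : ℝ) ∉ I)
    (hfk : ∀ j, j ≠ k → ∀ x t, t ∈ I → f j x t - f k x t ≠ 0)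
    {nalp : Fin n → ℝ} (hnalp : ∀ j, j ≠ k → nalp j = alp j) (hnalpk : nalp k = 1 - alp k) :
    SatisfiesYFX n lam nalp I ny nf := by
  intro j x t ht
  have ht0 : t ≠ 0 := fun h => hI0 (h ▸ ht)
  refine ⟨?_, hB.pdx_nf hs j ht ht0 fun hj => hfk j hj x t ht⟩
  rcases eq_or_ne j k with rfl | hj
  · rw [hnalpk]
    exact hB.pdx_ny_self hs hlam ht ht0
  · rw [hnalp j hj]
    exact hB.pdx_ny_of_ne hs hj (hlam.ne hj) ht (hfk j hj x t ht)

theorem satisfiesYFT (hB : IsBacklund k lam alp y f ny nf) (hs : IsSolution n lam alp I y f)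
    (hlam : Injective lam) (hI0 : (0 : ℝ) ∉ I)
    (hfk : ∀ j, j ≠ k → ∀ x t, t ∈ I → f j x t - f k x t ≠ 0) :
    SatisfiesYFT n lam I ny nf := by
  intro j x t ht
  have ht0 : t ≠ 0 := fun h => hI0 (h ▸ ht)
  refine ⟨?_, hB.pdt_nf hs j ht ht0 fun hj => hfk j hj x t ht⟩
  rcases eq_or_ne j k with rfl | hj
  · exact hB.pdt_ny_self hs hlam ht ht0
  · exact hB.pdt_ny_of_ne hs hj (hlam.ne hj) ht ht0 (hfk j hj x t ht)

end IsBacklund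

theorem statement15_general
    (n : ℕ)
    (lam alp : Fin n → ℝ) (hlam : Function.Injective lam)
    (a b : ℝ) (I : Set ℝ) (hI : I = Set.Ioo a b) (hI0 : (0:ℝ) ∉ I)
    (y f : Fin n → ℝ → ℝ → ℝ)
    (hysmooth : ∀ j, ContDiffOn ℝ (⊤ : ℕ∞) (uncurry (y j)) (univ ×ˢ I))
    (hfsmooth : ∀ j, ContDiffOn ℝ (⊤ : ℕ∞) (uncurry (f j)) (univ ×ˢ I))
    -- system (yfx)
    (hyfx : ∀ j x t, t ∈ I →
      pdx (y j) x t = 2 * y j x t * f j x t - alp j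
      ∧ pdx (f j) x t = ucon n y x t - (f j x t)^2 - lam j)
    -- system (yft)
    (hyft : ∀ j x t, t ∈ I →
      pdt (y j) x t
        = 2 * pdx (ucon n y) x t * y j x t
          - 2 * (ucon n y x t + 2*lam j) * pdx (y j) x t
      ∧ pdt (f j) x t
        = pdx (fun x' t' => pdx (ucon n y) x' t'
            - 2*(ucon n y x' t' + 2*lam j) * f j x' t') x t)
    (k : Fin n)
    (hfkne : ∀ j, j ≠ k → ∀ x t, t ∈ I → f j x t - f k x t ≠ 0)
    -- the Bäcklund transformation B_k
    (ny nf : Fin n → ℝ → ℝ → ℝ) (nalp : Fin n → ℝ)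
    (hnf : ∀ j, j ≠ k → ∀ x t,
      nf j x t = -(f k x t) - (lam j - lam k) / (f j x t - f k x t))
    (hnfk : ∀ x t, nf k x t = -(f k x t))
    (hny : ∀ j, j ≠ k → ∀ x t,
      ny j x t = ((f j x t - f k x t) / (lam j - lam k))
                  * ((f j x t - f k x t) * y j x t - alp j))
    (hnyk : ∀ x t,
      ny k x t = -(y k x t) + 6*t*((f k x t)^2 + lam k) - x
                  - ∑ j ∈ Finset.univ.erase k, (ny j x t + y j x t))
    (hnalp : ∀ j, j ≠ k → nalp j = alp j) (hnalpk : nalp k = 1 - alp k) :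
    -- the transformed data satisfies (yfx), (yft) with (uy')
    (∀ j x t, t ∈ I →
      pdx (ny j) x t = 2 * ny j x t * nf j x t - nalp j
      ∧ pdx (nf j) x t = ucon n ny x t - (nf j x t)^2 - lam j)
    ∧ (∀ j x t, t ∈ I →
      pdt (ny j) x t
        = 2 * pdx (ucon n ny) x t * ny j x t
          - 2 * (ucon n ny x t + 2*lam j) * pdx (ny j) x t
      ∧ pdt (nf j) x t
        = pdx (fun x' t' => pdx (ucon n ny) x' t'
            - 2*(ucon n ny x' t' + 2*lam j) * nf j x' t') x t) := by
  have hIo : IsOpen I := hI ▸ isOpen_Ioo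
  have hs : IsSolution n lam alp I y f :=
    ⟨fun j _ _ => differentiableAt_of_contDiffOn_prod hIo (hysmooth j),
      fun j _ _ => differentiableAt_of_contDiffOn_prod hIo (hfsmooth j), hyfx, hyft⟩
  have hB : IsBacklund k lam alp y f ny nf := ⟨hnf, hnfk, hny, hnyk⟩
  exact ⟨hB.satisfiesYFX hs hlam hI0 hfkne hnalp hnalpk, hB.satisfiesYFT hs hlam hI0 hfkne⟩

/-- the Bäcklund transformation `B_k` in the variables `(y, f)` maps solutions
of (yfx), (yft), (uy') with parameters `α` to solutions with `α̃_k = 1 − α_k`,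
`α̃_j = α_j` (`j ≠ k`). -/
theorem statement15
    (n : ℕ) (hn : 1 ≤ n)
    (lam alp : Fin n → ℝ) (hlam : Function.Injective lam)
    (a b : ℝ) (I : Set ℝ) (hI : I = Set.Ioo a b) (hI0 : (0:ℝ) ∉ I)
    (y f : Fin n → ℝ → ℝ → ℝ)
    (hysmooth : ∀ j, ContDiffOn ℝ (⊤ : ℕ∞) (uncurry (y j)) (univ ×ˢ I))
    (hfsmooth : ∀ j, ContDiffOn ℝ (⊤ : ℕ∞) (uncurry (f j)) (univ ×ˢ I))
    -- system (yfx)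
    (hyfx : ∀ j x t, t ∈ I →
      pdx (y j) x t = 2 * y j x t * f j x t - alp j
      ∧ pdx (f j) x t = ucon n y x t - (f j x t)^2 - lam j)
    -- system (yft)
    (hyft : ∀ j x t, t ∈ I →
      pdt (y j) x t
        = 2 * pdx (ucon n y) x t * y j x t
          - 2 * (ucon n y x t + 2*lam j) * pdx (y j) x t
      ∧ pdt (f j) x t
        = pdx (fun x' t' => pdx (ucon n y) x' t'
            - 2*(ucon n y x' t' + 2*lam j) * f j x' t') x t)
    (k : Fin n)
    (hfkne : ∀ j, j ≠ k → ∀ x t, t ∈ I → f j x t - f k x t ≠ 0)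
    -- the Bäcklund transformation B_k
    (ny nf : Fin n → ℝ → ℝ → ℝ) (nalp : Fin n → ℝ)
    (hnf : ∀ j, j ≠ k → ∀ x t,
      nf j x t = -(f k x t) - (lam j - lam k) / (f j x t - f k x t))
    (hnfk : ∀ x t, nf k x t = -(f k x t))
    (hny : ∀ j, j ≠ k → ∀ x t,
      ny j x t = ((f j x t - f k x t) / (lam j - lam k))
                  * ((f j x t - f k x t) * y j x t - alp j))
    (hnyk : ∀ x t,
      ny k x t = -(y k x t) + 6*t*((f k x t)^2 + lam k) - x
                  - ∑ j ∈ Finset.univ.erase k, (ny j x t + y j x t))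
    (hnalp : ∀ j, j ≠ k → nalp j = alp j) (hnalpk : nalp k = 1 - alp k) :
    -- the transformed data satisfies (yfx), (yft) with (uy')
    (∀ j x t, t ∈ I →
      pdx (ny j) x t = 2 * ny j x t * nf j x t - nalp j
      ∧ pdx (nf j) x t = ucon n ny x t - (nf j x t)^2 - lam j)
    ∧ (∀ j x t, t ∈ I →
      pdt (ny j) x t
        = 2 * pdx (ucon n ny) x t * ny j x t
          - 2 * (ucon n ny x t + 2*lam j) * pdx (ny j) x t
      ∧ pdt (nf j) x t
        = pdx (fun x' t' => pdx (ucon n ny) x' t'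
            - 2*(ucon n ny x' t' + 2*lam j) * nf j x' t') x t) :=
  statement15_general n lam alp hlam a b I hI hI0 y f hysmooth hfsmooth hyfx hyft k hfkne ny nf nalp
    hnf hnfk hny hnyk hnalp hnalpk
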